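/- If two alternating Cantor series ∑ (−1)^n ε_n/(d_1⋯d_n) and ∑ (−1)^n ε'_n/(d_1⋯d_n) with digits agreeing up to position m−1 and ε_m ≠ ε'_m represent the same number, then |ε_m − ε'_m| = 1, and (assuming ε_m = ε'_m + 1) for all i ≥ 1: ε_{m+2i−1} = d_{m+2i−1} − 1, ε_{m+2i} = 0, ε'_{m+2i−1} = 0, ε'_{m+2i} = d_{m+2i} − 1. -/

import Mathlib

open Finset

/-- Product d_1 d_2 ... d_n. -/
noncomputable def P (d : ℕ → ℕ) (n : ℕ) : ℝ := ∏ i ∈ Finset.Icc 1 n, (d i : ℝ)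

/-- The alternating Cantor series sum ∑_{n≥1} (-1)^n ε_n/(d_1...d_n). -/
noncomputable def negaSum (d ε : ℕ → ℕ) : ℝ :=
  ∑' n : ℕ, (-1 : ℝ) ^ (n + 1) * (ε (n + 1) : ℝ) / P d (n + 1)

/-- a₀ = ∑_{n≥1} (-1)^{n+1}/(d_1...d_n). -/
noncomputable def a0 (d : ℕ → ℕ) : ℝ := ∑' n : ℕ, (-1 : ℝ) ^ n / P d (n + 1)

/-!
Put `δₙ = εₙ - ε'ₙ`. Since the digits agree before `m`, equality of the two series says that
`δₘ / (d₁⋯dₘ)` equals the signed tail `∑_{j≥0} (-1)ʲ δₘ₊ⱼ₊₁ / (d₁⋯dₘ₊ⱼ₊₁)`. As `|δₙ| ≤ dₙ - 1`,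
this tail is dominated termwise by the telescoping series
`∑ (dₙ - 1) / (d₁⋯dₙ) = ∑ (1 / (d₁⋯dₙ₋₁) - 1 / (d₁⋯dₙ)) = 1 / (d₁⋯dₘ)`, so `|δₘ| ≤ 1`.
If `δₘ = 1` the tail attains this bound, which forces equality in every term, i.e.
`(-1)ʲ δₘ₊ⱼ₊₁ = dₘ₊ⱼ₊₁ - 1`: the digits are extremal with alternating roles.
-/

open Filter Topology

lemma eq_of_norm_le_of_tsum_eq {ι : Type*} {a b : ι → ℝ} {B : ℝ} (hb : HasSum b B)
    (hab : ∀ i, ‖a i‖ ≤ b i) (ha : ∑' i, a i = B) : a = b := by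
  by_contra hne
  obtain ⟨i, hi⟩ := Function.ne_iff.1 hne
  have hle (j : ι) : a j ≤ b j := (Real.le_norm_self _).trans (hab j)
  have hsum : HasSum a B := ha ▸ (hb.summable.of_norm_bounded hab).hasSum
  exact (hasSum_lt hle ((hle i).lt_of_ne hi) hsum hb).false

lemma norm_neg_one_pow_mul_div_le {x y p : ℝ} (k : ℕ) (hp : 0 < p) (hx : |x| ≤ y) :
    ‖(-1) ^ k * x / p‖ ≤ y / p := by
  rw [Real.norm_eq_abs, abs_div, abs_mul, abs_pow, abs_neg, abs_one, one_pow, one_mul,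
    abs_of_pos hp]
  gcongr

lemma cast_le_pred {e D : ℕ} (hD : 1 ≤ D) (h : e ≤ D - 1) : (e : ℝ) ≤ D - 1 := by
  have := (Nat.cast_le (α := ℝ)).2 h
  rwa [Nat.cast_sub hD, Nat.cast_one] at this

lemma abs_sub_le_pred {e e' D : ℕ} (hD : 1 ≤ D) (he : e ≤ D - 1) (he' : e' ≤ D - 1) :
    |(e : ℝ) - e'| ≤ D - 1 :=
  abs_sub_le_of_nonneg_of_le (Nat.cast_nonneg e) (cast_le_pred hD he)
    (Nat.cast_nonneg e') (cast_le_pred hD he')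

lemma eq_pred_and_eq_zero_of_sub_eq {e e' D : ℕ} (hD : 1 ≤ D) (he : e ≤ D - 1)
    (h : (e : ℝ) - e' = D - 1) : e = D - 1 ∧ e' = 0 := by
  have : e = e' + (D - 1) := by
    have hcast : (e : ℝ) = ((e' + (D - 1) : ℕ) : ℝ) := by push_cast [Nat.cast_sub hD]; linarith
    exact_mod_cast hcast
  omega

lemma eq_succ_or_succ_eq_of_abs_sub_le_one {a b : ℕ} (hne : a ≠ b) (h : |(a : ℝ) - b| ≤ 1) :
    a = b + 1 ∨ b = a + 1 := by
  have : |(a : ℤ) - b| ≤ 1 := by exact_mod_cast h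
  rw [abs_le] at this
  omega

lemma tsum_succ_eq_add_tsum_of_eq_zero {G : Type*} [AddCommGroup G] [TopologicalSpace G]
    [IsTopologicalAddGroup G] [T2Space G] {u : ℕ → G} {m : ℕ} (hm : 1 ≤ m)
    (hu : Summable fun n => u (n + 1)) (hzero : ∀ n, 1 ≤ n → n < m → u n = 0) :
    ∑' n, u (n + 1) = u m + ∑' j, u (m + j + 1) := by
  obtain ⟨k, rfl⟩ : ∃ k, m = k + 1 := ⟨m - 1, by omega⟩
  rw [← hu.sum_add_tsum_nat_add k, Finset.sum_eq_zero fun i hi => hzero (i + 1) (by omega)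
    (by simpa using Finset.mem_range.1 hi), zero_add,
    ((summable_nat_add_iff k).2 hu).tsum_eq_zero_add, zero_add]
  congr 2 with j
  exact congrArg u (by omega)

lemma P_succ (d : ℕ → ℕ) (n : ℕ) : P d (n + 1) = P d n * d (n + 1) := by
  rw [P, P, Finset.prod_Icc_succ_top (by omega)]

lemma P_pos {d : ℕ → ℕ} (hd : ∀ n, 1 ≤ n → 0 < d n) (n : ℕ) : 0 < P d n :=
  Finset.prod_pos fun i hi => by exact_mod_cast hd i (Finset.mem_Icc.1 hi).1

section
variable {d : ℕ → ℕ} (hd : ∀ n, 1 ≤ n → 2 ≤ d n)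
include hd

lemma two_pow_le_P (n : ℕ) : (2 : ℝ) ^ n ≤ P d n := by
  induction n with
  | zero => simp [P]
  | succ n ih =>
    rw [P_succ, pow_succ]
    have h2 : (2 : ℝ) ≤ d (n + 1) := by exact_mod_cast hd (n + 1) (by omega)
    exact mul_le_mul ih h2 zero_le_two ((pow_nonneg zero_le_two n).trans ih)

lemma tendsto_P_atTop : Tendsto (P d) atTop atTop :=
  tendsto_atTop_mono (two_pow_le_P hd) (tendsto_pow_atTop_atTop_of_one_lt one_lt_two)

lemma hasSum_pred_div_P (m : ℕ) :
    HasSum (fun j => ((d (m + j + 1) : ℝ) - 1) / P d (m + j + 1)) (P d m)⁻¹ := by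
  have hP := P_pos fun n hn => zero_lt_two.trans_le (hd n hn)
  have hd1 (n : ℕ) : (1 : ℝ) ≤ d (n + 1) := by
    exact_mod_cast (hd (n + 1) (by omega)).trans' one_le_two
  have hterm (j : ℕ) : ((d (m + j + 1) : ℝ) - 1) / P d (m + j + 1)
      = (P d (m + j))⁻¹ - (P d (m + j + 1))⁻¹ := by
    have hPj := hP (m + j)
    have hdj := hd1 (m + j)
    rw [P_succ]
    field_simp
  rw [hasSum_iff_tendsto_nat_of_nonneg fun j => div_nonneg (sub_nonneg.2 (hd1 _)) (hP _).le]
  have htelescope (n : ℕ) : ∑ j ∈ range n, ((P d (m + j))⁻¹ - (P d (m + j + 1))⁻¹)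
      = (P d m)⁻¹ - (P d (m + n))⁻¹ :=
    Finset.sum_range_sub' (fun j => (P d (m + j))⁻¹) n
  simp_rw [hterm, htelescope]
  have hinv : Tendsto (fun n => (P d (m + n))⁻¹) atTop (𝓝 0) :=
    ((tendsto_P_atTop hd).comp
      (tendsto_atTop_mono (fun _ => le_add_self) tendsto_id)).inv_tendsto_atTop
  simpa using hinv.const_sub (P d m)⁻¹

lemma summable_negaSum {ε : ℕ → ℕ} (hε : ∀ n, 1 ≤ n → ε n ≤ d n - 1) :
    Summable fun n => (-1 : ℝ) ^ (n + 1) * ε (n + 1) / P d (n + 1) := by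
  refine (hasSum_pred_div_P hd 0).summable.of_norm_bounded fun n => ?_
  have hn : 1 ≤ n + 1 := n.succ_pos
  rw [zero_add]
  refine norm_neg_one_pow_mul_div_le _ (P_pos (fun n hn => zero_lt_two.trans_le (hd n hn)) _) ?_
  rw [Nat.abs_cast]
  exact cast_le_pred ((hd _ hn).trans' one_le_two) (hε _ hn)

lemma negaSum_sub_negaSum {ε ε' : ℕ → ℕ} (hε : ∀ n, 1 ≤ n → ε n ≤ d n - 1)
    (hε' : ∀ n, 1 ≤ n → ε' n ≤ d n - 1) :
    negaSum d ε - negaSum d ε'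
      = ∑' n, (-1 : ℝ) ^ (n + 1) * ((ε (n + 1) : ℝ) - ε' (n + 1)) / P d (n + 1) := by
  rw [negaSum, negaSum, ← (summable_negaSum hd hε).tsum_sub (summable_negaSum hd hε')]
  congr 1 with n
  ring

lemma sub_div_P_eq_tsum_of_negaSum_eq {ε ε' : ℕ → ℕ} {m : ℕ} (hm : 1 ≤ m)
    (hε : ∀ n, 1 ≤ n → ε n ≤ d n - 1) (hε' : ∀ n, 1 ≤ n → ε' n ≤ d n - 1)
    (hagree : ∀ n, n < m → ε n = ε' n) (heq : negaSum d ε = negaSum d ε') :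
    ((ε m : ℝ) - ε' m) / P d m
      = ∑' j, (-1 : ℝ) ^ j * ((ε (m + j + 1) : ℝ) - ε' (m + j + 1)) / P d (m + j + 1) := by
  set δ : ℕ → ℝ := fun n => (ε n : ℝ) - ε' n
  set T := ∑' j, (-1 : ℝ) ^ j * δ (m + j + 1) / P d (m + j + 1)
  have hsplit : 0 = (-1) ^ m * δ m / P d m
      + ∑' j, (-1) ^ (m + j + 1) * δ (m + j + 1) / P d (m + j + 1) := by
    rw [← sub_eq_zero.2 heq, negaSum_sub_negaSum hd hε hε']
    exact tsum_succ_eq_add_tsum_of_eq_zero (u := fun n => (-1) ^ n * δ n / P d n) hm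
      (((summable_negaSum hd hε).sub (summable_negaSum hd hε')).congr fun n => by ring)
      fun n _ hn => by simp [δ, hagree n hn]
  have hsign (j : ℕ) : (-1 : ℝ) ^ (m + j + 1) * δ (m + j + 1) / P d (m + j + 1)
      = -(-1) ^ m * ((-1) ^ j * δ (m + j + 1) / P d (m + j + 1)) := by
    ring
  simp_rw [hsign, tsum_mul_left] at hsplit
  have : (-1 : ℝ) ^ m * (δ m / P d m - T) = 0 := by linear_combination -hsplit
  exact sub_eq_zero.1 ((mul_eq_zero.1 this).resolve_left (pow_ne_zero _ (by norm_num)))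

end

theorem alternating_cantor_eq_implies_tail (d ε ε' : ℕ → ℕ) (m : ℕ)
    (hm : 1 ≤ m) (hd : ∀ n, 1 ≤ n → 2 ≤ d n)
    (hε : ∀ n, 1 ≤ n → ε n ≤ d n - 1) (hε' : ∀ n, 1 ≤ n → ε' n ≤ d n - 1)
    (hagree : ∀ n, n < m → ε n = ε' n)
    (hne : ε m ≠ ε' m)
    (heq : negaSum d ε = negaSum d ε') :
    (ε m = ε' m + 1 ∨ ε' m = ε m + 1) ∧
    (ε m = ε' m + 1 → ∀ i : ℕ, ε (m + 2 * i + 1) = d (m + 2 * i + 1) - 1 ∧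
      ε (m + 2 * i + 2) = 0 ∧ ε' (m + 2 * i + 1) = 0 ∧
      ε' (m + 2 * i + 2) = d (m + 2 * i + 2) - 1) := by
  have hP := P_pos (fun n hn => zero_lt_two.trans_le (hd n hn))
  have hd1 (n : ℕ) (hn : 1 ≤ n) : 1 ≤ d n := (hd n hn).trans' one_le_two
  have hgap := sub_div_P_eq_tsum_of_negaSum_eq hd hm hε hε' hagree heq
  have hdom (j : ℕ) := norm_neg_one_pow_mul_div_le j (hP (m + j + 1))
    (abs_sub_le_pred (hd1 _ (by omega)) (hε (m + j + 1) (by omega)) (hε' _ (by omega)))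
  have hbound := tsum_of_norm_bounded (hasSum_pred_div_P hd m) hdom
  rw [← hgap, Real.norm_eq_abs, abs_div, abs_of_pos (hP m), ← one_div,
    div_le_div_iff_of_pos_right (hP m)] at hbound
  refine ⟨eq_succ_or_succ_eq_of_abs_sub_le_one hne hbound, fun hsucc i => ?_⟩
  have htail := eq_of_norm_le_of_tsum_eq (hasSum_pred_div_P hd m) hdom
    (by rw [← hgap, hsucc, Nat.cast_succ, add_sub_cancel_left, one_div])
  have hodd := (div_left_inj' (hP _).ne').1 (congrFun htail (2 * i))
  have heven := (div_left_inj' (hP _).ne').1 (congrFun htail (2 * i + 1))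
  rw [(even_two_mul i).neg_one_pow, one_mul] at hodd
  rw [(odd_two_mul_add_one i).neg_one_pow, neg_one_mul, neg_sub,
    show m + (2 * i + 1) + 1 = m + 2 * i + 2 by omega] at heven
  obtain ⟨h1, h1'⟩ := eq_pred_and_eq_zero_of_sub_eq (hd1 _ (by omega)) (hε _ (by omega)) hodd
  obtain ⟨h2', h2⟩ := eq_pred_and_eq_zero_of_sub_eq (hd1 _ (by omega)) (hε' _ (by omega)) heven
  exact ⟨h1, h2, h1', h2'⟩
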